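/- arXiv:2209.01679 — 7 statements merged into one kernel-verified Lean document; each statement's English description precedes it below -/
import Mathlib

section
/- (Planar version of the symmetric-inertia points) Let a system of non-collinear points with positive masses be given in the plane, with center of masses C at the origin, principal axes along the coordinate axes (i.e., Σ mⱼ xⱼ yⱼ = 0), and principal axial moments I_x = Σ mⱼ yⱼ², I_y = Σ mⱼ xⱼ² with I_x > I_y. Set d̂ = √((I_x - I_y)/m) with m the total mass. Then at each of the two points F₁ = (d̂, 0) and F₂ = (-d̂, 0), the moment of inertia of the system about every line through that point is the same, equal to I_x. -/
/-!
Huygens–Steiner: when the centre of masses is at the origin, the moment of inertia about the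
line through `F` with direction `v` is the moment about the parallel line through the origin plus
`m · dist(F, ℝv)²`. For `v = (cos θ, sin θ)` and principal axes along the coordinate axes the
former is `I_x cos² θ + I_y sin² θ`, and for `F = (±d̂, 0)` the latter is
`m d̂² sin² θ = (I_x - I_y) sin² θ`; they add up to `I_x` for every `θ`.
-/

open scoped RealInnerProductSpace

section InnerProductSpace

variable {E : Type*} [NormedAddCommGroup E] [InnerProductSpace ℝ E]

def lineThrough (F v : E) : Set E := {p | ∃ t : ℝ, p = F + t • v}

theorem sq_infDist_lineThrough (x F v : E) (hv : v ≠ 0) :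
    Metric.infDist x (lineThrough F v) ^ 2 = ‖x - F‖ ^ 2 - ⟪x - F, v⟫ ^ 2 / ‖v‖ ^ 2 := by
  have hv2 : ‖v‖ ^ 2 ≠ 0 := by positivity
  set t₀ := ⟪x - F, v⟫ / ‖v‖ ^ 2
  set foot := F + t₀ • v
  have hperp : ⟪x - foot, v⟫ = 0 := by
    simp only [foot, sub_add_eq_sub_sub, inner_sub_left, real_inner_smul_left,
      real_inner_self_eq_norm_sq, t₀]
    field_simp; ring
  have hmin : ∀ t : ℝ, dist x foot ≤ dist x (F + t • v) := by
    intro t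
    have hsplit : x - (F + t • v) = (x - foot) + (t₀ - t) • v := by
      simp only [foot, sub_smul]; abel
    rw [dist_eq_norm, dist_eq_norm, hsplit]
    refine (sq_le_sq₀ (norm_nonneg _) (norm_nonneg _)).1 ?_
    rw [norm_add_sq_real, real_inner_smul_right, hperp, mul_zero, mul_zero, add_zero]
    exact le_add_of_nonneg_right (sq_nonneg _)
  have hdist : Metric.infDist x (lineThrough F v) = dist x foot :=
    le_antisymm (Metric.infDist_le_dist_of_mem ⟨t₀, rfl⟩)
      ((Metric.le_infDist (s := lineThrough F v) ⟨F, 0, by simp⟩).2 fun _ ⟨t, ht⟩ => ht ▸ hmin t)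
  rw [hdist, dist_eq_norm, show x - foot = (x - F) - t₀ • v by simp only [foot]; abel,
    norm_sub_sq_real, real_inner_smul_right, norm_smul, Real.norm_eq_abs, mul_pow, sq_abs]
  simp only [t₀]
  field_simp
  ring

noncomputable def axialMoment {ι : Type*} [Fintype ι] (mass : ι → ℝ) (M : ι → E) (F v : E) : ℝ :=
  ∑ j, mass j * Metric.infDist (M j) (lineThrough F v) ^ 2

theorem axialMoment_eq_axialMoment_zero_add {ι : Type*} [Fintype ι] (mass : ι → ℝ) (M : ι → E)
    (hC : ∑ j, mass j • M j = 0) (F v : E) (hv : v ≠ 0) :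
    axialMoment mass M F v
      = axialMoment mass M 0 v + (∑ j, mass j) * Metric.infDist F (lineThrough 0 v) ^ 2 := by
  have hv2 : ‖v‖ ^ 2 ≠ 0 := by positivity
  set u := F - (⟪F, v⟫ / ‖v‖ ^ 2) • v
  have hterm : ∀ j, mass j * (‖M j - F‖ ^ 2 - ⟪M j - F, v⟫ ^ 2 / ‖v‖ ^ 2)
      = mass j * (‖M j‖ ^ 2 - ⟪M j, v⟫ ^ 2 / ‖v‖ ^ 2)
        + mass j * (‖F‖ ^ 2 - ⟪F, v⟫ ^ 2 / ‖v‖ ^ 2) - 2 * ⟪mass j • M j, u⟫ := by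
    intro j
    simp only [u, norm_sub_sq_real, inner_sub_left, inner_sub_right, real_inner_smul_left,
      real_inner_smul_right]
    field_simp
    ring
  have hcross : ∑ j, ⟪mass j • M j, u⟫ = 0 := by rw [← sum_inner, hC, inner_zero_left]
  simp only [axialMoment, sq_infDist_lineThrough _ _ _ hv, sub_zero, Finset.sum_mul, hterm,
    Finset.sum_sub_distrib, Finset.sum_add_distrib, ← Finset.mul_sum, hcross]
  ring

end InnerProductSpace

section Plane

local notation "ℝ²" => EuclideanSpace ℝ (Fin 2)

theorem sq_add_sq_ne_zero_of_ne_zero {v : ℝ²} (hv : v ≠ 0) : v 0 ^ 2 + v 1 ^ 2 ≠ 0 := by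
  simpa [EuclideanSpace.real_norm_sq_eq, Fin.sum_univ_two] using
    pow_ne_zero 2 (norm_ne_zero_iff.2 hv)

theorem sq_infDist_lineThrough_fin_two (x F v : ℝ²) (hv : v ≠ 0) :
    Metric.infDist x (lineThrough F v) ^ 2
      = ((x 0 - F 0) * v 1 - (x 1 - F 1) * v 0) ^ 2 / (v 0 ^ 2 + v 1 ^ 2) := by
  have hv2 := sq_add_sq_ne_zero_of_ne_zero hv
  rw [sq_infDist_lineThrough x F v hv]
  simp only [EuclideanSpace.real_norm_sq_eq, PiLp.inner_apply, Fin.sum_univ_two, PiLp.sub_apply,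
    Real.inner_apply]
  field_simp
  ring

theorem axialMoment_fin_two_of_principal_axes {ι : Type*} [Fintype ι] (mass : ι → ℝ)
    (M : ι → ℝ²)
    (hcx : ∑ j, mass j * M j 0 = 0) (hcy : ∑ j, mass j * M j 1 = 0)
    (hprin : ∑ j, mass j * (M j 0 * M j 1) = 0) (F v : ℝ²) (hv : v ≠ 0) :
    axialMoment mass M F v
      = ((∑ j, mass j * M j 0 ^ 2) * v 1 ^ 2 + (∑ j, mass j * M j 1 ^ 2) * v 0 ^ 2
          + (∑ j, mass j) * (F 0 * v 1 - F 1 * v 0) ^ 2) / (v 0 ^ 2 + v 1 ^ 2) := by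
  have hC : ∑ j, mass j • M j = 0 := by
    ext i; fin_cases i <;> simpa
  have hterm : ∀ j, mass j * Metric.infDist (M j) (lineThrough 0 v) ^ 2
      = (v 1 ^ 2 * (mass j * M j 0 ^ 2) + v 0 ^ 2 * (mass j * M j 1 ^ 2)
          - 2 * v 0 * v 1 * (mass j * (M j 0 * M j 1))) / (v 0 ^ 2 + v 1 ^ 2) := by
    intro j
    rw [sq_infDist_lineThrough_fin_two _ _ _ hv]
    simp only [PiLp.zero_apply, sub_zero]
    ring
  rw [axialMoment_eq_axialMoment_zero_add mass M hC F v hv, axialMoment,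
    sq_infDist_lineThrough_fin_two _ _ _ hv]
  simp only [hterm, ← Finset.sum_div, Finset.sum_sub_distrib, Finset.sum_add_distrib,
    ← Finset.mul_sum, hprin, PiLp.zero_apply, sub_zero]
  ring

theorem axialMoment_eq_of_mul_sq_eq {ι : Type*} [Fintype ι] (mass : ι → ℝ) (M : ι → ℝ²)
    (hcx : ∑ j, mass j * M j 0 = 0) (hcy : ∑ j, mass j * M j 1 = 0)
    (hprin : ∑ j, mass j * (M j 0 * M j 1) = 0) (F v : ℝ²) (hv : v ≠ 0) (hF1 : F 1 = 0)
    (hF0 : (∑ j, mass j) * F 0 ^ 2 = ∑ j, mass j * M j 1 ^ 2 - ∑ j, mass j * M j 0 ^ 2) :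
    axialMoment mass M F v = ∑ j, mass j * M j 1 ^ 2 := by
  rw [axialMoment_fin_two_of_principal_axes mass M hcx hcy hprin F v hv, hF1,
    div_eq_iff (sq_add_sq_ne_zero_of_ne_zero hv)]
  linear_combination v 1 ^ 2 * hF0

end Plane

theorem planar_symmetric_inertia_points_general
    (N : ℕ) (M : Fin N → EuclideanSpace ℝ (Fin 2)) (mass : Fin N → ℝ)
    (hmass : ∀ j, 0 < mass j)
    (hcx : ∑ j, mass j * M j 0 = 0) (hcy : ∑ j, mass j * M j 1 = 0)
    (hprin : ∑ j, mass j * (M j 0 * M j 1) = 0)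
    (m Ix Iy : ℝ) (hm : m = ∑ j, mass j)
    (hIx : Ix = ∑ j, mass j * (M j 1) ^ 2) (hIy : Iy = ∑ j, mass j * (M j 0) ^ 2)
    (hIlt : Iy < Ix)
    (F₁ F₂ : EuclideanSpace ℝ (Fin 2))
    (hF₁0 : F₁ 0 = Real.sqrt ((Ix - Iy) / m)) (hF₁1 : F₁ 1 = 0)
    (hF₂0 : F₂ 0 = -Real.sqrt ((Ix - Iy) / m)) (hF₂1 : F₂ 1 = 0) :
    ∀ v : EuclideanSpace ℝ (Fin 2), v ≠ 0 →
      (∑ j, mass j * (Metric.infDist (M j) {p | ∃ t : ℝ, p = F₁ + t • v}) ^ 2 = Ix ∧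
       ∑ j, mass j * (Metric.infDist (M j) {p | ∃ t : ℝ, p = F₂ + t • v}) ^ 2 = Ix) := by
  intro v hv
  obtain ⟨j, -⟩ : (Finset.univ : Finset (Fin N)).Nonempty := by
    contrapose! hIlt
    simp [hIx, hIy, hIlt]
  have hm0 : 0 < m := hm ▸ Finset.sum_pos (fun j _ => hmass j) ⟨j, Finset.mem_univ j⟩
  have hd : m * Real.sqrt ((Ix - Iy) / m) ^ 2 = Ix - Iy := by
    rw [Real.sq_sqrt (div_nonneg (sub_nonneg.2 hIlt.le) hm0.le)]
    field_simp
  subst hm hIx hIy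
  exact ⟨axialMoment_eq_of_mul_sq_eq mass M hcx hcy hprin F₁ v hv hF₁1 (by rw [hF₁0, hd]),
    axialMoment_eq_of_mul_sq_eq mass M hcx hcy hprin F₂ v hv hF₂1 (by rw [hF₂0, neg_sq, hd])⟩

/-- Planar symmetric-inertia points: at each of `F₁ = (d̂, 0)` and `F₂ = (-d̂, 0)`
with `d̂ = √((I_x - I_y)/m)`, the moment of inertia about every line through that
point equals `I_x`. -/
theorem planar_symmetric_inertia_points
    (N : ℕ) (M : Fin N → EuclideanSpace ℝ (Fin 2)) (mass : Fin N → ℝ)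
    (hmass : ∀ j, 0 < mass j)
    (hnoncol : ¬ ∃ a b c : ℝ, (a, b) ≠ (0, 0) ∧ ∀ j, a * M j 0 + b * M j 1 = c)
    (hcx : ∑ j, mass j * M j 0 = 0) (hcy : ∑ j, mass j * M j 1 = 0)
    (hprin : ∑ j, mass j * (M j 0 * M j 1) = 0)
    (m Ix Iy : ℝ) (hm : m = ∑ j, mass j)
    (hIx : Ix = ∑ j, mass j * (M j 1) ^ 2) (hIy : Iy = ∑ j, mass j * (M j 0) ^ 2)
    (hIlt : Iy < Ix)
    (F₁ F₂ : EuclideanSpace ℝ (Fin 2))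
    (hF₁0 : F₁ 0 = Real.sqrt ((Ix - Iy) / m)) (hF₁1 : F₁ 1 = 0)
    (hF₂0 : F₂ 0 = -Real.sqrt ((Ix - Iy) / m)) (hF₂1 : F₂ 1 = 0) :
    ∀ v : EuclideanSpace ℝ (Fin 2), v ≠ 0 →
      (∑ j, mass j * (Metric.infDist (M j) {p | ∃ t : ℝ, p = F₁ + t • v}) ^ 2 = Ix ∧
       ∑ j, mass j * (Metric.infDist (M j) {p | ∃ t : ℝ, p = F₂ + t • v}) ^ 2 = Ix) :=
  planar_symmetric_inertia_points_general N M mass hmass hcx hcy hprin m Ix Iy hm hIx hIy hIlt F₁ F₂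
    hF₁0 hF₁1 hF₂0 hF₂1
end

section
/- Let a system of points with positive masses be given in the plane with center of masses at the origin, principal axes along the coordinate axes, principal axial moments I_x > I_y, and total mass m. For any line ℓ in the plane, the axial moment of inertia satisfies I_ℓ = I_x + m·d₁·d₂', where d₁ and d₂ are the distances from the points F₁ = (√((I_x−I_y)/m), 0) and F₂ = (−√((I_x−I_y)/m), 0) to ℓ, taken with opposite signs if F₁ and F₂ are on opposite sides of ℓ (i.e., d₁·d₂' is the product of signed distances). -/
open scoped BigOperators

/-!
Expanding the square, the centroid and principal-axis conditions kill all cross terms, so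
`I_ℓ = n₁² I_y + n₂² I_x + m c²`. The product of the signed distances of `(±d̂, 0)` is
`c² - n₁² d̂²`, and `m d̂² = I_x - I_y` together with `n₁² + n₂² = 1` closes the identity.
-/

theorem Finset.sum_mul_sq_linear_sub {ι : Type*} (s : Finset ι) (w x y : ι → ℝ) (a b c : ℝ) :
    ∑ j ∈ s, w j * (a * x j + b * y j - c) ^ 2 =
      a ^ 2 * ∑ j ∈ s, w j * x j ^ 2 + b ^ 2 * ∑ j ∈ s, w j * y j ^ 2
        + 2 * a * b * ∑ j ∈ s, w j * (x j * y j)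
        - 2 * c * (a * ∑ j ∈ s, w j * x j + b * ∑ j ∈ s, w j * y j)
        + c ^ 2 * ∑ j ∈ s, w j := by
  simp only [Finset.mul_sum, ← Finset.sum_add_distrib, ← Finset.sum_sub_distrib]
  exact Finset.sum_congr rfl fun j _ => by ring

theorem Finset.univ_nonempty_of_sum_ne_sum {ι : Type*} [Fintype ι] {f g : ι → ℝ}
    (h : ∑ j, f j ≠ ∑ j, g j) : (Finset.univ : Finset ι).Nonempty :=
  Finset.nonempty_of_sum_ne_zero (f := f - g) (by simpa [Finset.sum_sub_distrib, sub_eq_zero])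

/-- For a planar system in principal central coordinates with `I_y < I_x`, the axial
moment about any line `{p : n₁x + n₂y = c}` (unit normal) equals
`I_x + m · d₁ · d₂'`, the product of the signed distances from
`F₁ = (d̂, 0)` and `F₂ = (-d̂, 0)` to the line, where `d̂ = √((I_x - I_y)/m)`. -/
theorem axial_moment_eq_Ix_add_signed_dist_prod
    (N : ℕ) (x y mass : Fin N → ℝ)
    (hmass : ∀ j, 0 < mass j)
    (hcx : ∑ j, mass j * x j = 0) (hcy : ∑ j, mass j * y j = 0)
    (hprin : ∑ j, mass j * (x j * y j) = 0)
    (m Ix Iy : ℝ) (hm : m = ∑ j, mass j)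
    (hIx : Ix = ∑ j, mass j * (y j) ^ 2) (hIy : Iy = ∑ j, mass j * (x j) ^ 2)
    (hIlt : Iy < Ix)
    (dhat : ℝ) (hdhat : dhat = Real.sqrt ((Ix - Iy) / m))
    (n₁ n₂ c : ℝ) (hn : n₁ ^ 2 + n₂ ^ 2 = 1) :
    ∑ j, mass j * (n₁ * x j + n₂ * y j - c) ^ 2 =
      Ix + m * ((n₁ * dhat + n₂ * 0 - c) * (n₁ * (-dhat) + n₂ * 0 - c)) := by
  have hm_pos : 0 < m := hm ▸ Finset.sum_pos (fun j _ => hmass j)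
    (Finset.univ_nonempty_of_sum_ne_sum (hIx ▸ hIy ▸ hIlt.ne'))
  have hm_dhat : m * dhat ^ 2 = Ix - Iy := by
    rw [hdhat, Real.sq_sqrt (div_nonneg (sub_nonneg.mpr hIlt.le) hm_pos.le),
      mul_div_cancel₀ _ hm_pos.ne']
  rw [Finset.sum_mul_sq_linear_sub, hcx, hcy, hprin, ← hm, ← hIx, ← hIy]
  linear_combination Ix * hn + n₁ ^ 2 * hm_dhat
end

section
/- (Theorem: envelope of hyperplanes with equal hyperplanar moment) Let points in ℝ^k with positive masses, total mass m, center of masses at the origin, principal hyperplanar moments 0 < J₁ < J₂ < … < J_k (so Σⱼ mⱼ x_{ji} x_{jl} = 0 for i ≠ l and J_i = Σⱼ mⱼ x_{ji}²). Define a_i² = (J_i − J₁)/m for i = 2,…,k and a₁ = 0. Then any hyperplane tangent to the quadric x₁²/A² + x₂²/(A² − a₂²) + … + x_k²/(A² − a_k²) = 1 (for a parameter A with A² ≠ a_i² for all i) has hyperplanar moment of inertia equal to J₁ + m·A². -/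
/-! By the Huygens–Steiner theorem in principal central coordinates, the hyperplane
`⟪v, p⟫ = 1` has moment `(∑ᵢ vᵢ² Jᵢ + m) / ‖v‖²`. For the tangent hyperplane at `x₀` one has
`vᵢ = x₀ᵢ / (A² - aᵢ²)`, so the equation of the quadric reads `∑ᵢ vᵢ² (A² - aᵢ²) = 1`;
substituting `Jᵢ = J₁ + m aᵢ²` turns the numerator into `(J₁ + m A²) ‖v‖²`. -/

open scoped RealInnerProductSpace

open Finset

theorem infDist_setOf_inner_eq {E : Type*} [NormedAddCommGroup E] [InnerProductSpace ℝ E]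
    {v : E} (hv : v ≠ 0) (c : ℝ) (y : E) :
    Metric.infDist y {p : E | ⟪v, p⟫ = c} = |⟪v, y⟫ - c| / ‖v‖ := by
  have hv' : 0 < ‖v‖ := norm_pos_iff.mpr hv
  set foot : E := y - ((⟪v, y⟫ - c) / ‖v‖ ^ 2) • v
  have hfoot : foot ∈ {p : E | ⟪v, p⟫ = c} := by
    simp only [Set.mem_ofPred_eq, foot, inner_sub_right, inner_smul_right, real_inner_self_eq_norm_sq]
    field_simp
    ring
  refine le_antisymm ((Metric.infDist_le_dist_of_mem hfoot).trans_eq ?_)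
    ((Metric.le_infDist ⟨foot, hfoot⟩).2 fun p (hp : ⟪v, p⟫ = c) => ?_)
  · rw [dist_eq_norm, show y - foot = ((⟪v, y⟫ - c) / ‖v‖ ^ 2) • v by simp [foot],
      norm_smul, Real.norm_eq_abs, abs_div, abs_of_nonneg (by positivity : (0 : ℝ) ≤ ‖v‖ ^ 2)]
    field_simp
  · rw [div_le_iff₀ hv', dist_eq_norm, ← hp, ← inner_sub_right, mul_comm]
    exact abs_real_inner_le_norm v (y - p)

section Moments

variable {α ι : Type*} [Fintype α] [Fintype ι] (mass : α → ℝ) (M : α → EuclideanSpace ℝ ι)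

theorem EuclideanSpace.real_inner_eq_sum_mul (v x : EuclideanSpace ℝ ι) :
    ⟪v, x⟫ = ∑ i, v i * x i := by
  simp [PiLp.inner_apply, mul_comm]

theorem sum_mul_inner_sq_of_principal
    (hprin : ∀ i l : ι, i ≠ l → ∑ j, mass j * (M j i * M j l) = 0) (v : EuclideanSpace ℝ ι) :
    ∑ j, mass j * ⟪v, M j⟫ ^ 2 = ∑ i, v i ^ 2 * ∑ j, mass j * M j i ^ 2 := by
  calc ∑ j, mass j * ⟪v, M j⟫ ^ 2
      = ∑ j, ∑ i, ∑ l, v i * v l * (mass j * (M j i * M j l)) := by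
        simp_rw [EuclideanSpace.real_inner_eq_sum_mul, sq, sum_mul_sum, mul_sum]
        exact sum_congr rfl fun j _ => sum_congr rfl fun i _ => sum_congr rfl fun l _ => by ring
    _ = ∑ i, ∑ l, v i * v l * ∑ j, mass j * (M j i * M j l) := by
        simp_rw [mul_sum]
        rw [sum_comm]
        exact sum_congr rfl fun i _ => sum_comm
    _ = ∑ i, v i ^ 2 * ∑ j, mass j * M j i ^ 2 := sum_congr rfl fun i _ => by
        rw [Fintype.sum_eq_single i fun l hl => by rw [hprin i l (Ne.symm hl), mul_zero]]
        simp only [← pow_two]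

theorem sum_mul_inner_of_centered (hcenter : ∀ i, ∑ j, mass j * M j i = 0)
    (v : EuclideanSpace ℝ ι) : ∑ j, mass j * ⟪v, M j⟫ = 0 := by
  simp_rw [EuclideanSpace.real_inner_eq_sum_mul, mul_sum]
  rw [sum_comm]
  refine sum_eq_zero fun i _ => ?_
  rw [← mul_zero (v i), ← hcenter i, mul_sum]
  exact sum_congr rfl fun j _ => by ring

theorem sum_mul_inner_sub_sq (hcenter : ∀ i, ∑ j, mass j * M j i = 0)
    (hprin : ∀ i l : ι, i ≠ l → ∑ j, mass j * (M j i * M j l) = 0)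
    (v : EuclideanSpace ℝ ι) (c : ℝ) :
    ∑ j, mass j * (⟪v, M j⟫ - c) ^ 2 =
      ∑ i, v i ^ 2 * ∑ j, mass j * M j i ^ 2 + (∑ j, mass j) * c ^ 2 := by
  have hexpand : ∀ j, mass j * (⟪v, M j⟫ - c) ^ 2 =
      mass j * ⟪v, M j⟫ ^ 2 - 2 * c * (mass j * ⟪v, M j⟫) + mass j * c ^ 2 := fun j => by ring
  simp only [hexpand, sum_add_distrib, sum_sub_distrib, ← mul_sum, ← sum_mul,
    sum_mul_inner_sq_of_principal mass M hprin, sum_mul_inner_of_centered mass M hcenter]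
  ring

theorem sum_mul_infDist_sq_setOf_inner_eq (hcenter : ∀ i, ∑ j, mass j * M j i = 0)
    (hprin : ∀ i l : ι, i ≠ l → ∑ j, mass j * (M j i * M j l) = 0)
    {v : EuclideanSpace ℝ ι} (hv : v ≠ 0) (c : ℝ) :
    ∑ j, mass j * Metric.infDist (M j) {p | ⟪v, p⟫ = c} ^ 2 =
      (∑ i, v i ^ 2 * ∑ j, mass j * M j i ^ 2 + (∑ j, mass j) * c ^ 2) / ‖v‖ ^ 2 := by
  simp only [infDist_setOf_inner_eq hv, div_pow, sq_abs, ← mul_div_assoc, ← sum_div,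
    sum_mul_inner_sub_sq mass M hcenter hprin]

end Moments

theorem sum_mul_eq_zero_of_sum_eq_zero {α : Type*} [Fintype α] {w : α → ℝ}
    (hw : ∀ j, 0 ≤ w j) (h : ∑ j, w j = 0) (f : α → ℝ) : ∑ j, w j * f j = 0 := by
  have hzero := (sum_eq_zero_iff_of_nonneg fun j _ => hw j).1 h
  exact sum_eq_zero fun j hj => by rw [hzero j hj, zero_mul]

theorem div_sq_mul_self (x d : ℝ) : (x / d) ^ 2 * d = x ^ 2 / d := by
  rcases eq_or_ne d 0 with rfl | hd
  · simp
  · field_simp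

theorem sum_mul_add_eq_of_sum_mul_sub_eq_one {ι : Type*} [Fintype ι] {w a J : ι → ℝ}
    {J₀ m B : ℝ} (hJ : ∀ i, J i = J₀ + m * a i) (htangent : ∑ i, w i * (B - a i) = 1) :
    ∑ i, w i * J i + m = (J₀ + m * B) * ∑ i, w i := by
  calc ∑ i, w i * J i + m = ∑ i, w i * J i + m * ∑ i, w i * (B - a i) := by rw [htangent, mul_one]
    _ = (J₀ + m * B) * ∑ i, w i := by
      rw [mul_sum, mul_sum, ← sum_add_distrib]
      exact sum_congr rfl fun i _ => by rw [hJ i]; ring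

theorem envelope_equal_hyperplanar_moment_general
    (k N : ℕ) (hk : 0 < k)
    (M : Fin N → EuclideanSpace ℝ (Fin k)) (mass : Fin N → ℝ)
    (hmass : ∀ j, 0 < mass j)
    (m : ℝ) (hm : m = ∑ j, mass j)
    (hcenter : ∀ i : Fin k, ∑ j, mass j * M j i = 0)
    (hprin : ∀ i l : Fin k, i ≠ l → ∑ j, mass j * (M j i * M j l) = 0)
    (J : Fin k → ℝ) (hJ : ∀ i, J i = ∑ j, mass j * (M j i) ^ 2)
    (asq : Fin k → ℝ) (hasq : ∀ i, asq i = (J i - J ⟨0, hk⟩) / m)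
    (A : ℝ)
    (x₀ : Fin k → ℝ) (hx₀ : ∑ i, (x₀ i) ^ 2 / (A ^ 2 - asq i) = 1)
    (π : Set (EuclideanSpace ℝ (Fin k)))
    (hπ : π = {p : EuclideanSpace ℝ (Fin k) | ∑ i, p i * x₀ i / (A ^ 2 - asq i) = 1}) :
    ∑ j, mass j * (Metric.infDist (M j) π) ^ 2 = J ⟨0, hk⟩ + m * A ^ 2 := by
  set v : EuclideanSpace ℝ (Fin k) := WithLp.toLp 2 fun i => x₀ i / (A ^ 2 - asq i)
  have hplane : π = {p | ⟪v, p⟫ = 1} := by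
    simp only [hπ, EuclideanSpace.real_inner_eq_sum_mul, v, div_mul_eq_mul_div, mul_comm]
  have htangent : ∑ i, v i ^ 2 * (A ^ 2 - asq i) = 1 := by
    simpa only [v, PiLp.toLp_apply, div_sq_mul_self] using hx₀
  have hv : v ≠ 0 := by
    rintro hv
    simp [hv] at htangent
  have hJ_asq : ∀ i, J i = J ⟨0, hk⟩ + m * asq i := by
    intro i
    rcases eq_or_ne m 0 with hm0 | hm0
    · have hJ0 : ∀ i, J i = 0 := fun i =>
        (hJ i).trans (sum_mul_eq_zero_of_sum_eq_zero (fun j => (hmass j).le) (hm ▸ hm0) _)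
      simp [hJ0, hm0]
    · rw [hasq i]
      field_simp
      ring
  simp_rw [hplane, sum_mul_infDist_sq_setOf_inner_eq mass M hcenter hprin hv, ← hm, one_pow,
    mul_one, ← hJ]
  rw [sum_mul_add_eq_of_sum_mul_sub_eq_one hJ_asq htangent,
    ← EuclideanSpace.real_norm_sq_eq, mul_div_cancel_right₀ _ (by positivity)]

/-- Envelope of hyperplanes with equal hyperplanar moment: in principal central
coordinates with `0 < J₁ < … < J_k` and `aᵢ² = (Jᵢ - J₁)/m`, every hyperplane
tangent to the quadric `∑ᵢ xᵢ²/(A² - aᵢ²) = 1` has hyperplanar moment of inertia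
equal to `J₁ + m·A²`. -/
theorem envelope_equal_hyperplanar_moment
    (k N : ℕ) (hk : 0 < k)
    (M : Fin N → EuclideanSpace ℝ (Fin k)) (mass : Fin N → ℝ)
    (hmass : ∀ j, 0 < mass j)
    (m : ℝ) (hm : m = ∑ j, mass j)
    (hcenter : ∀ i : Fin k, ∑ j, mass j * M j i = 0)
    (hprin : ∀ i l : Fin k, i ≠ l → ∑ j, mass j * (M j i * M j l) = 0)
    (J : Fin k → ℝ) (hJ : ∀ i, J i = ∑ j, mass j * (M j i) ^ 2)
    (hJpos : ∀ i, 0 < J i) (hJmono : StrictMono J)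
    (asq : Fin k → ℝ) (hasq : ∀ i, asq i = (J i - J ⟨0, hk⟩) / m)
    (A : ℝ) (hA : ∀ i, A ^ 2 ≠ asq i)
    (x₀ : Fin k → ℝ) (hx₀ : ∑ i, (x₀ i) ^ 2 / (A ^ 2 - asq i) = 1)
    (π : Set (EuclideanSpace ℝ (Fin k)))
    (hπ : π = {p : EuclideanSpace ℝ (Fin k) | ∑ i, p i * x₀ i / (A ^ 2 - asq i) = 1}) :
    ∑ j, mass j * (Metric.infDist (M j) π) ^ 2 = J ⟨0, hk⟩ + m * A ^ 2 :=
  envelope_equal_hyperplanar_moment_general k N hk M mass hmass m hm hcenter hprin J hJ asq hasq A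
    x₀ hx₀ π hπ
end

section
/- With notation as in the envelope theorem, for a hyperplane tangent at point (x₁₀,…,x_{k0}) to the quadric Σᵢ xᵢ²/(A² − aᵢ²) = 1 (a₁ = 0), the quantity S = d² + Σᵢ aᵢ² nᵢ² − a_k² equals A² − a_k², where n is the unit normal to the tangent hyperplane and d = 1/Δ is its distance to the origin, with Δ² = Σᵢ x_{i0}²/(A² − aᵢ²)². -/
/-! Writing `aᵢ² = A² - (A² - aᵢ²)` splits `Σ aᵢ² nᵢ²` into `A² Δ² / Δ²` minus the quadric
equation divided by `Δ²`, that is into `A² - d²`. -/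

open Finset

theorem sum_mul_sq_div_sub_eq {K ι : Type*} [Field K] [Fintype ι] (c : K) (a x : ι → K)
    (ha : ∀ i, c ≠ a i) :
    ∑ i, a i * (x i / (c - a i)) ^ 2 =
      c * ∑ i, x i ^ 2 / (c - a i) ^ 2 - ∑ i, x i ^ 2 / (c - a i) := by
  rw [mul_sum, ← sum_sub_distrib]
  refine sum_congr rfl fun i _ => ?_
  have : c - a i ≠ 0 := sub_ne_zero.mpr (ha i)
  field_simp
  ring

theorem tangent_hyperplane_S_identity_general
    (k : ℕ)
    (asq : Fin k → ℝ)
    (A : ℝ) (hA : ∀ i, A ^ 2 ≠ asq i)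
    (x₀ : Fin k → ℝ) (hx₀ : ∑ i, (x₀ i) ^ 2 / (A ^ 2 - asq i) = 1)
    (Δ : ℝ) (hΔpos : 0 < Δ)
    (hΔ : Δ ^ 2 = ∑ i, (x₀ i) ^ 2 / (A ^ 2 - asq i) ^ 2)
    (n : Fin k → ℝ) (hn : ∀ i, n i = x₀ i / ((A ^ 2 - asq i) * Δ))
    (d : ℝ) (hd : d = 1 / Δ) :
    d ^ 2 + ∑ i, asq i * (n i) ^ 2 = A ^ 2 := by
  have hsum : ∑ i, asq i * n i ^ 2 = (A ^ 2 * Δ ^ 2 - 1) / Δ ^ 2 := by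
    simp only [hn, ← div_div, div_pow _ Δ, ← mul_div_assoc]
    rw [← sum_div, sum_mul_sq_div_sub_eq _ _ _ hA, ← hΔ, hx₀]
  rw [hsum, hd]
  field_simp
  ring

/-- Algebraic identity behind the envelope theorem: for a point `x₀` on the quadric
`∑ᵢ x₀ᵢ²/(A² - aᵢ²) = 1` with unit normal `nᵢ = x₀ᵢ/((A² - aᵢ²)Δ)` and distance
`d = 1/Δ` of the tangent hyperplane to the origin, one has `d² + ∑ᵢ aᵢ²nᵢ² = A²`
(equivalently `S = d² + ∑ᵢ aᵢ²nᵢ² - a_k² = A² - a_k²`). -/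
theorem tangent_hyperplane_S_identity
    (k : ℕ) (hk : 0 < k)
    (asq : Fin k → ℝ) (hasq0 : asq ⟨0, hk⟩ = 0) (hasqmono : StrictMono asq)
    (A : ℝ) (hA : ∀ i, A ^ 2 ≠ asq i)
    (x₀ : Fin k → ℝ) (hx₀ : ∑ i, (x₀ i) ^ 2 / (A ^ 2 - asq i) = 1)
    (Δ : ℝ) (hΔpos : 0 < Δ)
    (hΔ : Δ ^ 2 = ∑ i, (x₀ i) ^ 2 / (A ^ 2 - asq i) ^ 2)
    (n : Fin k → ℝ) (hn : ∀ i, n i = x₀ i / ((A ^ 2 - asq i) * Δ))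
    (d : ℝ) (hd : d = 1 / Δ) :
    d ^ 2 + ∑ i, asq i * (n i) ^ 2 = A ^ 2 :=
  tangent_hyperplane_S_identity_general k asq A hA x₀ hx₀ Δ hΔpos hΔ n hn d hd
end

section
/- (Pearson, hyperplane of best fit) Let points M₁,…,M_N in ℝ^k with positive masses, center of masses at the origin, and hyperplanar inertia operator J (the k×k symmetric positive-definite matrix with entries J_{il} = Σⱼ mⱼ x_{ji} x_{jl}). Among all hyperplanes in ℝ^k, the minimal possible hyperplanar moment of inertia J_π = Σⱼ mⱼ dist(Mⱼ, π)² equals the smallest eigenvalue of J, and it is attained by the hyperplane through the origin orthogonal to a corresponding eigenvector. -/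
/-! The distance from `x` to the hyperplane `⟪p, n⟫ = c` (with `‖n‖ = 1`) is `|⟪x, n⟫ - c|`.
As the centre of mass is the origin, the cross term vanishes and the moment of that hyperplane is
`nᵀ J n + c² ∑ mⱼ` (Steiner), so it is at least `nᵀ J n`. For the symmetric matrix `J` the
quadratic form on unit vectors is bounded below by the smallest eigenvalue, because `J - μ I` has
nonnegative eigenvalues and is therefore positive semidefinite; an eigenvector attains the bound. -/

open scoped BigOperators RealInnerProductSpace

open Matrix

section Hyperplane

variable {E : Type*} [NormedAddCommGroup E] [InnerProductSpace ℝ E]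

theorem infDist_setOf_inner_eq_s9 {n : E} (hn : ‖n‖ = 1) (x : E) (c : ℝ) :
    Metric.infDist x {p | ⟪p, n⟫ = c} = |⟪x, n⟫ - c| := by
  have hnn : ⟪n, n⟫ = 1 := by rw [real_inner_self_eq_norm_sq, hn, one_pow]
  have hfoot : x - (⟪x, n⟫ - c) • n ∈ {p | ⟪p, n⟫ = c} := by
    simp only [Set.mem_ofPred_eq, inner_sub_left, real_inner_smul_left, hnn]
    ring
  refine le_antisymm ?_ ((Metric.le_infDist ⟨_, hfoot⟩).2 fun y (hy : ⟪y, n⟫ = c) => ?_)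
  · calc Metric.infDist x _ ≤ dist x _ := Metric.infDist_le_dist_of_mem hfoot
      _ = |⟪x, n⟫ - c| := by simp [norm_smul, hn]
  · calc |⟪x, n⟫ - c| = |⟪x - y, n⟫| := by rw [inner_sub_left, hy]
      _ ≤ ‖x - y‖ * ‖n‖ := abs_real_inner_le_norm _ _
      _ = dist x y := by rw [hn, mul_one, dist_eq_norm]

theorem sum_mul_inner_sub_sq_of_sum_smul_eq_zero {ι : Type*} [Fintype ι] {mass : ι → ℝ}
    {M : ι → E} (hcenter : ∑ j, mass j • M j = 0) (n : E) (c : ℝ) :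
    ∑ j, mass j * (⟪M j, n⟫ - c) ^ 2 = ∑ j, mass j * ⟪M j, n⟫ ^ 2 + c ^ 2 * ∑ j, mass j := by
  have hlin : ∑ j, mass j * ⟪M j, n⟫ = 0 := by
    simpa only [sum_inner, real_inner_smul_left, inner_zero_left] using congrArg (⟪·, n⟫) hcenter
  calc ∑ j, mass j * (⟪M j, n⟫ - c) ^ 2
      = ∑ j, mass j * ⟪M j, n⟫ ^ 2 - 2 * c * ∑ j, mass j * ⟪M j, n⟫ + c ^ 2 * ∑ j, mass j := by
        simp only [Finset.mul_sum, ← Finset.sum_sub_distrib, ← Finset.sum_add_distrib]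
        exact Finset.sum_congr rfl fun j _ => by ring
    _ = _ := by rw [hlin]; ring

end Hyperplane

theorem Matrix.IsHermitian.mul_dotProduct_self_le {n : Type*} [Fintype n] [DecidableEq n]
    {A : Matrix n n ℝ} (hA : A.IsHermitian) {μ : ℝ}
    (hμ : ∀ (μ' : ℝ) (v : n → ℝ), v ≠ 0 → A *ᵥ v = μ' • v → μ ≤ μ') (v : n → ℝ) :
    μ * (v ⬝ᵥ v) ≤ v ⬝ᵥ (A *ᵥ v) := by
  have hB : (A - μ • 1).IsHermitian := hA.sub (isHermitian_one.smul (IsSelfAdjoint.all μ))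
  have hpsd : (A - μ • 1).PosSemidef := by
    refine hB.posSemidef_iff_eigenvalues_nonneg.2 fun i => show (0 : ℝ) ≤ _ from ?_
    set b := hB.eigenvectorBasis i
    have hb : ⇑b ≠ 0 := by simpa using hB.eigenvectorBasis.orthonormal.ne_zero i
    have hAb : A *ᵥ b = (hB.eigenvalues i + μ) • b := by
      have hBb := hB.mulVec_eigenvectorBasis i
      rw [sub_mulVec, smul_mulVec, one_mulVec, sub_eq_iff_eq_add] at hBb
      rw [hBb, add_smul]
    linarith [hμ _ _ hb hAb]
  have hquad := hpsd.dotProduct_mulVec_nonneg v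
  simp only [star_trivial, sub_mulVec, smul_mulVec, one_mulVec, dotProduct_sub, dotProduct_smul,
    smul_eq_mul] at hquad
  linarith

theorem EuclideanSpace.dotProduct_self_eq_norm_sq {n : Type*} [Fintype n]
    (v : EuclideanSpace ℝ n) : v ⬝ᵥ v = ‖v‖ ^ 2 := by
  rw [← real_inner_self_eq_norm_sq, EuclideanSpace.inner_eq_star_dotProduct, star_trivial]

section Inertia

variable {ι n : Type*} [Fintype ι]

def inertiaMatrix (mass : ι → ℝ) (M : ι → EuclideanSpace ℝ n) : Matrix n n ℝ :=
  Matrix.of fun i l => ∑ j, mass j * (M j i * M j l)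

variable (mass : ι → ℝ) (M : ι → EuclideanSpace ℝ n)

theorem inertiaMatrix_eq_sum_vecMulVec :
    inertiaMatrix mass M = ∑ j, mass j • vecMulVec (M j) (M j) := by
  ext i l
  simp [inertiaMatrix, Matrix.sum_apply, vecMulVec_apply]

theorem inertiaMatrix_isHermitian : (inertiaMatrix mass M).IsHermitian := by
  ext i l
  simp only [inertiaMatrix, conjTranspose_apply, of_apply, star_trivial, mul_comm]

theorem dotProduct_inertiaMatrix_mulVec [Fintype n] (v : EuclideanSpace ℝ n) :
    v ⬝ᵥ (inertiaMatrix mass M *ᵥ v) = ∑ j, mass j * ⟪M j, v⟫ ^ 2 := by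
  simp only [inertiaMatrix_eq_sum_vecMulVec, sum_mulVec, smul_mulVec, vecMulVec_mulVec,
    dotProduct_sum, dotProduct_smul, EuclideanSpace.inner_eq_star_dotProduct, star_trivial]
  simp only [dotProduct_comm, MulOpposite.smul_eq_mul_unop, MulOpposite.unop_op, smul_eq_mul, sq]

end Inertia

theorem pearson_best_fit_hyperplane_general
    (k N : ℕ) (M : Fin N → EuclideanSpace ℝ (Fin k)) (mass : Fin N → ℝ)
    (hmass : ∀ j, 0 < mass j)
    (hcenter : ∀ i : Fin k, ∑ j, mass j * M j i = 0)
    (μ : ℝ) (n : EuclideanSpace ℝ (Fin k)) (hn : ‖n‖ = 1)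
    (heig : ∀ i : Fin k, ∑ l, (∑ j, mass j * (M j i * M j l)) * n l = μ * n i)
    (hmin : ∀ (μ' : ℝ) (v : Fin k → ℝ), v ≠ 0 →
      (∀ i : Fin k, ∑ l, (∑ j, mass j * (M j i * M j l)) * v l = μ' * v i) → μ ≤ μ') :
    (∑ j, mass j * (Metric.infDist (M j) {p : EuclideanSpace ℝ (Fin k) | ⟪p, n⟫ = 0}) ^ 2
        = μ) ∧
    ∀ (n' : EuclideanSpace ℝ (Fin k)) (c : ℝ), ‖n'‖ = 1 →
      μ ≤ ∑ j, mass j *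
        (Metric.infDist (M j) {p : EuclideanSpace ℝ (Fin k) | ⟪p, n'⟫ = c}) ^ 2 := by
  have hcenter' : ∑ j, mass j • M j = 0 := by
    ext i
    simpa using hcenter i
  have hmoment : ∀ (n' : EuclideanSpace ℝ (Fin k)) (c : ℝ), ‖n'‖ = 1 →
      ∑ j, mass j * (Metric.infDist (M j) {p | ⟪p, n'⟫ = c}) ^ 2 =
        (n' : Fin k → ℝ) ⬝ᵥ (inertiaMatrix mass M *ᵥ n') + c ^ 2 * ∑ j, mass j := by
    intro n' c hn'
    simp only [infDist_setOf_inner_eq_s9 hn', sq_abs, dotProduct_inertiaMatrix_mulVec]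
    exact sum_mul_inner_sub_sq_of_sum_smul_eq_zero hcenter' n' c
  refine ⟨?_, fun n' c hn' => ?_⟩
  · have heig' : inertiaMatrix mass M *ᵥ n = μ • n := funext heig
    rw [hmoment n 0 hn, heig', dotProduct_smul, EuclideanSpace.dotProduct_self_eq_norm_sq, hn]
    simp
  · have hrayleigh := (inertiaMatrix_isHermitian mass M).mul_dotProduct_self_le
      (fun μ' v hv hev => hmin μ' v hv (congrFun hev)) n'
    rw [EuclideanSpace.dotProduct_self_eq_norm_sq, hn', one_pow, mul_one] at hrayleigh
    have hc : 0 ≤ c ^ 2 * ∑ j, mass j :=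
      mul_nonneg (sq_nonneg c) (Finset.sum_nonneg fun j _ => (hmass j).le)
    rw [hmoment n' c hn']
    linarith

/-- Pearson's theorem on the hyperplane of best fit: the minimal hyperplanar moment
of inertia over all hyperplanes in ℝ^k equals the smallest eigenvalue `μ` of the
inertia matrix `J_{il} = ∑ⱼ mⱼ x_{ji} x_{jl}`, and it is attained by the hyperplane
through the origin (the center of masses) orthogonal to a corresponding eigenvector. -/
theorem pearson_best_fit_hyperplane
    (k N : ℕ) (M : Fin N → EuclideanSpace ℝ (Fin k)) (mass : Fin N → ℝ)
    (hmass : ∀ j, 0 < mass j)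
    (hcenter : ∀ i : Fin k, ∑ j, mass j * M j i = 0)
    (hpd : ∀ v : EuclideanSpace ℝ (Fin k), v ≠ 0 → 0 < ∑ j, mass j * ⟪M j, v⟫ ^ 2)
    (μ : ℝ) (n : EuclideanSpace ℝ (Fin k)) (hn : ‖n‖ = 1)
    (heig : ∀ i : Fin k, ∑ l, (∑ j, mass j * (M j i * M j l)) * n l = μ * n i)
    (hmin : ∀ (μ' : ℝ) (v : Fin k → ℝ), v ≠ 0 →
      (∀ i : Fin k, ∑ l, (∑ j, mass j * (M j i * M j l)) * v l = μ' * v i) → μ ≤ μ') :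
    (∑ j, mass j * (Metric.infDist (M j) {p : EuclideanSpace ℝ (Fin k) | ⟪p, n⟫ = 0}) ^ 2
        = μ) ∧
    ∀ (n' : EuclideanSpace ℝ (Fin k)) (c : ℝ), ‖n'‖ = 1 →
      μ ≤ ∑ j, mass j *
        (Metric.infDist (M j) {p : EuclideanSpace ℝ (Fin k) | ⟪p, n'⟫ = c}) ^ 2 :=
  pearson_best_fit_hyperplane_general k N M mass hmass hcenter μ n hn heig hmin
end

section
/- (Two confocal conics through a point) Let α > β > 0 and let P = (x_P, y_P) have x_P ≠ 0 and y_P ≠ 0. Then there exist exactly two real values λ₁ < β < λ₂ < α such that x_P²/(α − λ) + y_P²/(β − λ) = 1; the conic with parameter λ₁ is an ellipse and the one with parameter λ₂ is a hyperbola, and they intersect orthogonally at P (their gradients at P are orthogonal). -/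
/-!
Clearing denominators, `P` lies on the conic with parameter `λ ∉ {α, β}` iff `λ` is a root of
the monic quadratic `q λ = (α - λ)(β - λ) - x_P²(β - λ) - y_P²(α - λ)`. Since
`q β = -y_P²(α - β) < 0 < x_P²(α - β) = q α`, it has one root `λ₁ < β` and one root
`λ₂ ∈ (β, α)`. Writing `q λ = (λ - λ₁)(λ - λ₂)`, the dot
product of the gradients is `4 x_P² / q α + 4 y_P² / q β = 4/(α - β) - 4/(α - β) = 0`.
-/

theorem Real.exists_factorization_of_quadratic_neg {s p b : ℝ} (h : b ^ 2 - s * b + p < 0) :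
    ∃ r₁ r₂ : ℝ, r₁ < b ∧ b < r₂ ∧ ∀ l, l ^ 2 - s * l + p = (l - r₁) * (l - r₂) := by
  have hdisc : (2 * b - s) ^ 2 < s ^ 2 - 4 * p := by linear_combination 4 * h
  obtain ⟨hlow, hhigh⟩ := Real.sq_lt.mp hdisc
  have hsqrt := Real.sq_sqrt ((sq_nonneg _).trans hdisc.le)
  refine ⟨(s - √(s ^ 2 - 4 * p)) / 2, (s + √(s ^ 2 - 4 * p)) / 2, by linarith, by linarith,
    fun l => ?_⟩
  linear_combination (1 / 4 : ℝ) * hsqrt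

def confocalPoly (α β x y l : ℝ) : ℝ :=
  (α - l) * (β - l) - x ^ 2 * (β - l) - y ^ 2 * (α - l)

section confocalPoly

variable {α β x y l : ℝ}

theorem confocalPoly_eq :
    confocalPoly α β x y l =
      l ^ 2 - (α + β - x ^ 2 - y ^ 2) * l + (α * β - x ^ 2 * β - y ^ 2 * α) := by
  unfold confocalPoly; ring

theorem confocalPoly_left : confocalPoly α β x y α = x ^ 2 * (α - β) := by
  unfold confocalPoly; ring

theorem confocalPoly_right : confocalPoly α β x y β = -(y ^ 2 * (α - β)) := by
  unfold confocalPoly; ring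

theorem confocal_eq_one_iff (hα : l ≠ α) (hβ : l ≠ β) :
    x ^ 2 / (α - l) + y ^ 2 / (β - l) = 1 ↔ confocalPoly α β x y l = 0 := by
  have hα' : α - l ≠ 0 := sub_ne_zero.mpr hα.symm
  have hβ' : β - l ≠ 0 := sub_ne_zero.mpr hβ.symm
  rw [div_add_div _ _ hα' hβ', div_eq_one_iff_eq (mul_ne_zero hα' hβ'), confocalPoly]
  constructor <;> intro h <;> linear_combination -h

theorem exists_confocalPoly_factorization (hαβ : β < α) (hx : x ≠ 0) (hy : y ≠ 0) :
    ∃ l₁ l₂ : ℝ, l₁ < β ∧ β < l₂ ∧ l₂ < α ∧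
      ∀ l, confocalPoly α β x y l = (l - l₁) * (l - l₂) := by
  have hβneg : confocalPoly α β x y β < 0 := by
    rw [confocalPoly_right, neg_lt_zero]; exact mul_pos (by positivity) (sub_pos.mpr hαβ)
  rw [confocalPoly_eq] at hβneg
  obtain ⟨l₁, l₂, h₁, h₂, hfac⟩ := Real.exists_factorization_of_quadratic_neg hβneg
  have hfac' : ∀ l, confocalPoly α β x y l = (l - l₁) * (l - l₂) := fun l => by
    rw [confocalPoly_eq, hfac]
  have hαpos : 0 < (α - l₁) * (α - l₂) := by
    rw [← hfac', confocalPoly_left]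
    exact mul_pos (by positivity) (sub_pos.mpr hαβ)
  have hl₂α : 0 < α - l₂ := pos_of_mul_pos_right hαpos (sub_pos.mpr (h₁.trans hαβ)).le
  exact ⟨l₁, l₂, h₁, h₂, sub_pos.mp hl₂α, hfac'⟩

theorem confocal_gradients_orthogonal {l₁ l₂ : ℝ} (hαβ : α ≠ β) (hx : x ≠ 0) (hy : y ≠ 0)
    (hfac : ∀ l, confocalPoly α β x y l = (l - l₁) * (l - l₂)) :
    (2 * x / (α - l₁)) * (2 * x / (α - l₂)) + (2 * y / (β - l₁)) * (2 * y / (β - l₂)) = 0 := by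
  have hα : (α - l₁) * (α - l₂) = x ^ 2 * (α - β) := by
    rw [← confocalPoly_left (y := y), hfac]
  have hβ : (β - l₁) * (β - l₂) = -(y ^ 2 * (α - β)) := by
    rw [← confocalPoly_right (x := x), hfac]
  have hαβ' : α - β ≠ 0 := sub_ne_zero.mpr hαβ
  rw [div_mul_div_comm, div_mul_div_comm, hα, hβ]
  field_simp
  ring

end confocalPoly

theorem two_confocal_conics_through_point_general
    (α β xP yP : ℝ) (hαβ : β < α) (hx : xP ≠ 0) (hy : yP ≠ 0) :
    ∃ lam₁ lam₂ : ℝ,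
      lam₁ < β ∧ β < lam₂ ∧ lam₂ < α ∧
      xP ^ 2 / (α - lam₁) + yP ^ 2 / (β - lam₁) = 1 ∧
      xP ^ 2 / (α - lam₂) + yP ^ 2 / (β - lam₂) = 1 ∧
      (∀ lam : ℝ, lam ≠ α → lam ≠ β →
        xP ^ 2 / (α - lam) + yP ^ 2 / (β - lam) = 1 → lam = lam₁ ∨ lam = lam₂) ∧
      (2 * xP / (α - lam₁)) * (2 * xP / (α - lam₂)) +
        (2 * yP / (β - lam₁)) * (2 * yP / (β - lam₂)) = 0 := by
  obtain ⟨l₁, l₂, h₁β, hβ₂, h₂α, hfac⟩ := exists_confocalPoly_factorization hαβ hx hy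
  have hroot : ∀ l, l ≠ α → l ≠ β →
      (xP ^ 2 / (α - l) + yP ^ 2 / (β - l) = 1 ↔ l = l₁ ∨ l = l₂) := fun l hα hβ => by
    rw [confocal_eq_one_iff hα hβ, hfac, mul_eq_zero, sub_eq_zero, sub_eq_zero]
  refine ⟨l₁, l₂, h₁β, hβ₂, h₂α, ?_, ?_, fun l hα hβ => (hroot l hα hβ).mp,
    confocal_gradients_orthogonal hαβ.ne' hx hy hfac⟩
  · exact (hroot l₁ (by linarith) h₁β.ne).mpr (Or.inl rfl)
  · exact (hroot l₂ h₂α.ne hβ₂.ne').mpr (Or.inr rfl)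

/-- Through a point `P` with both coordinates nonzero there pass exactly two conics
of the confocal pencil `x²/(α-λ) + y²/(β-λ) = 1`: an ellipse (`λ₁ < β`) and a
hyperbola (`β < λ₂ < α`), and they intersect orthogonally at `P`. -/
theorem two_confocal_conics_through_point
    (α β xP yP : ℝ) (hβ : 0 < β) (hαβ : β < α) (hx : xP ≠ 0) (hy : yP ≠ 0) :
    ∃ lam₁ lam₂ : ℝ,
      lam₁ < β ∧ β < lam₂ ∧ lam₂ < α ∧
      xP ^ 2 / (α - lam₁) + yP ^ 2 / (β - lam₁) = 1 ∧
      xP ^ 2 / (α - lam₂) + yP ^ 2 / (β - lam₂) = 1 ∧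
      (∀ lam : ℝ, lam ≠ α → lam ≠ β →
        xP ^ 2 / (α - lam) + yP ^ 2 / (β - lam) = 1 → lam = lam₁ ∨ lam = lam₂) ∧
      (2 * xP / (α - lam₁)) * (2 * xP / (α - lam₂)) +
        (2 * yP / (β - lam₁)) * (2 * yP / (β - lam₂)) = 0 :=
  two_confocal_conics_through_point_general α β xP yP hαβ hx hy
end

section
/- (ℓ-planar best fit) Let points in ℝ^k with positive masses have center of masses at the origin and diagonal hyperplanar inertia operator with principal hyperplanar moments 0 < J₁ < J₂ < … < J_k (Jᵢ = Σⱼ mⱼ x_{ji}², cross terms zero). For 1 ≤ ℓ ≤ k−1, the minimum over all ℓ-dimensional affine subspaces π of the ℓ-planar moment J_π = Σⱼ mⱼ dist(Mⱼ, π)² equals J₁ + J₂ + … + J_{k−ℓ}, attained by the coordinate subspace through the origin spanned by the last ℓ standard basis vectors e_{k−ℓ+1},…,e_k. -/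
/-!
Let `π` pass through `q` with direction `V`, and let `P` be the orthogonal projection onto
`U = Vᗮ`, of dimension `k - ℓ`. Then `dist(M, π) ≥ ‖P (M - q)‖`; since the masses are centred
at the origin, the weighted sum of `‖P (Mⱼ - q)‖²` is smallest for `q = 0`; and since the
inertia is diagonal, `∑ⱼ mⱼ ‖P Mⱼ‖² = ∑ₚ ‖P eₚ‖² Jₚ`. The weights `‖P eₚ‖²` lie in `[0, 1]`
and add up to `tr P = k - ℓ`, so for increasing `J` this is at least `J₁ + ⋯ + J_{k-ℓ}`,
with equality for the coordinate plane.
-/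

open scoped RealInnerProductSpace
open Finset

section InnerProductSpace

variable {E : Type*} [NormedAddCommGroup E] [InnerProductSpace ℝ E]

theorem sum_mul_norm_sq_le_sum_mul_norm_sub_sq {ι : Type*} (s : Finset ι) {m : ι → ℝ}
    (hm : ∀ j ∈ s, 0 ≤ m j) {a : ι → E} (hcenter : ∑ j ∈ s, m j • a j = 0) (c : E) :
    ∑ j ∈ s, m j * ‖a j‖ ^ 2 ≤ ∑ j ∈ s, m j * ‖a j - c‖ ^ 2 := by
  have hexpand : ∑ j ∈ s, m j * ‖a j - c‖ ^ 2 = ∑ j ∈ s, m j * ‖a j‖ ^ 2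
      - 2 * ⟪∑ j ∈ s, m j • a j, c⟫ + (∑ j ∈ s, m j) * ‖c‖ ^ 2 := by
    simp only [norm_sub_sq_real, sum_inner, real_inner_smul_left, mul_sum, sum_mul,
      ← sum_sub_distrib, ← sum_add_distrib]
    exact sum_congr rfl fun j _ => by ring
  have hshift : 0 ≤ (∑ j ∈ s, m j) * ‖c‖ ^ 2 := mul_nonneg (sum_nonneg hm) (sq_nonneg _)
  rw [hexpand, hcenter, inner_zero_left]
  linarith

theorem norm_starProjection_sub_le_infDist {π : AffineSubspace ℝ E} {q : E} (hq : q ∈ π)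
    (U : Submodule ℝ E) [U.HasOrthogonalProjection] (hU : π.direction ≤ Uᗮ) (x : E) :
    ‖U.starProjection (x - q)‖ ≤ Metric.infDist x π := by
  refine (Metric.le_infDist ⟨q, hq⟩).2 fun y hy => ?_
  have hyq : U.starProjection (y - q) = 0 :=
    (U.starProjection_apply_eq_zero_iff).2 (hU (AffineSubspace.vsub_mem_direction hy hq))
  calc ‖U.starProjection (x - q)‖ = ‖U.starProjection (x - y)‖ := by
        rw [← sub_add_sub_cancel x y q, map_add, hyq, add_zero]
    _ ≤ ‖x - y‖ := U.norm_starProjection_apply_le _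
    _ = dist x y := (dist_eq_norm x y).symm

theorem sum_mul_norm_sum_smul_sq {ι κ : Type*} [Fintype ι] [Fintype κ] (m : κ → ℝ)
    (x : κ → ι → ℝ) (horth : ∀ p q, p ≠ q → ∑ j, m j * (x j p * x j q) = 0) (v : ι → E) :
    ∑ j, m j * ‖∑ p, x j p • v p‖ ^ 2 = ∑ p, ‖v p‖ ^ 2 * ∑ j, m j * x j p ^ 2 := by
  calc ∑ j, m j * ‖∑ p, x j p • v p‖ ^ 2
      = ∑ p, ∑ q, (∑ j, m j * (x j p * x j q)) * ⟪v p, v q⟫ := by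
        simp only [← real_inner_self_eq_norm_sq, sum_inner, inner_sum, real_inner_smul_left,
          real_inner_smul_right, mul_sum, sum_mul]
        rw [sum_comm]; refine sum_congr rfl fun p _ => ?_
        rw [sum_comm]
        exact sum_congr rfl fun q _ => sum_congr rfl fun j _ => by rw [real_inner_comm]; ring
    _ = ∑ p, ‖v p‖ ^ 2 * ∑ j, m j * x j p ^ 2 := by
        refine sum_congr rfl fun p _ => ?_
        rw [sum_eq_single p (fun q _ hqp => by rw [horth p q hqp.symm, zero_mul])
          (by simp), real_inner_self_eq_norm_sq, mul_comm]
        simp only [sq]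

theorem sum_mul_norm_map_sq {ι κ : Type*} [Fintype ι] [Fintype κ] (m : κ → ℝ)
    (M : κ → EuclideanSpace ℝ ι) (horth : ∀ p q, p ≠ q → ∑ j, m j * (M j p * M j q) = 0)
    (T : EuclideanSpace ℝ ι →ₗ[ℝ] E) :
    ∑ j, m j * ‖T (M j)‖ ^ 2
      = ∑ p, ‖T (EuclideanSpace.basisFun ι ℝ p)‖ ^ 2 * ∑ j, m j * M j p ^ 2 := by
  have hexpand : ∀ j, T (M j) = ∑ p, M j p • T (EuclideanSpace.basisFun ι ℝ p) := fun j => by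
    conv_lhs => rw [← (EuclideanSpace.basisFun ι ℝ).sum_repr (M j)]
    simp only [map_sum, map_smul, EuclideanSpace.basisFun_repr]
  simp only [hexpand]
  exact sum_mul_norm_sum_smul_sq m (fun j p => M j p) horth _

theorem OrthonormalBasis.sum_norm_starProjection_sq [FiniteDimensional ℝ E] {ι : Type*}
    [Fintype ι] (b : OrthonormalBasis ι ℝ E) (U : Submodule ℝ E) :
    ∑ i, ‖U.starProjection (b i)‖ ^ 2 = Module.finrank ℝ U := by
  have htrace := LinearMap.trace_eq_sum_inner (U.starProjection : E →ₗ[ℝ] E) b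
  have hproj : LinearMap.IsProj U (U.starProjection : E →ₗ[ℝ] E) :=
    ⟨U.starProjection_apply_mem, fun _ hx => Submodule.starProjection_eq_self_iff.2 hx⟩
  rw [hproj.trace] at htrace
  rw [htrace]
  refine sum_congr rfl fun i _ => ?_
  simpa [real_inner_comm] using (U.re_inner_starProjection_eq_normSq (b i)).symm

end InnerProductSpace

/-- `∑ₚ cₚ Jₚ - ∑_{p ∈ s} Jₚ = ∑ₚ (cₚ - 1_s(p)) (Jₚ - t)`, and every term is nonnegative. -/
theorem sum_le_sum_mul_of_forall_le_of_forall_ge {ι : Type*} [Fintype ι] [DecidableEq ι]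
    (s : Finset ι) {J c : ι → ℝ} {t : ℝ}
    (hlow : ∀ p ∈ s, J p ≤ t) (hhigh : ∀ p ∉ s, t ≤ J p) (hc0 : ∀ p, 0 ≤ c p)
    (hc1 : ∀ p, c p ≤ 1) (hsum : ∑ p, c p = #s) :
    ∑ p ∈ s, J p ≤ ∑ p, c p * J p := by
  have hdiff : ∑ p, c p * J p - ∑ p ∈ s, J p
      = ∑ p, (c p - if p ∈ s then 1 else 0) * (J p - t) := by
    simp only [sub_mul, mul_sub, sum_sub_distrib, ← sum_mul, hsum, ite_mul, one_mul, zero_mul,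
      sum_ite_mem, univ_inter]
    simp
  have hterm : ∀ p, 0 ≤ (c p - if p ∈ s then 1 else 0) * (J p - t) := by
    intro p
    by_cases hp : p ∈ s
    · rw [if_pos hp]
      exact mul_nonneg_of_nonpos_of_nonpos (by linarith [hc1 p]) (by linarith [hlow p hp])
    · rw [if_neg hp]
      exact mul_nonneg (by linarith [hc0 p]) (by linarith [hhigh p hp])
  linarith [sum_nonneg fun p (_ : p ∈ univ) => hterm p]

theorem Monotone.sum_filter_val_lt_le_sum_mul {k m : ℕ} (hm : 0 < m) (hmk : m ≤ k)
    {J c : Fin k → ℝ} (hJ : Monotone J) (hc0 : ∀ p, 0 ≤ c p) (hc1 : ∀ p, c p ≤ 1)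
    (hsum : ∑ p, c p = m) :
    ∑ p with p.val < m, J p ≤ ∑ p, c p * J p := by
  refine sum_le_sum_mul_of_forall_le_of_forall_ge _ (t := J ⟨m - 1, by omega⟩) ?_ ?_ hc0 hc1 ?_
  · intro p hp
    have : p.val < m := (mem_filter.1 hp).2
    exact hJ (show p.val ≤ m - 1 by omega)
  · intro p hp
    have : ¬ p.val < m := by simpa using hp
    exact hJ (show m - 1 ≤ p.val by omega)
  · rw [hsum, Fin.card_filter_val_lt, min_eq_right hmk]

theorem EuclideanSpace.infDist_span_single_sq {ι : Type*} [Fintype ι] [DecidableEq ι]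
    (P : ι → Prop) [DecidablePred P] (x : EuclideanSpace ℝ ι) :
    Metric.infDist x (Submodule.span ℝ
        {v : EuclideanSpace ℝ ι | ∃ i, P i ∧ v = EuclideanSpace.single i 1} : Set _) ^ 2
      = ∑ i with ¬ P i, x i ^ 2 := by
  set W := Submodule.span ℝ {v : EuclideanSpace ℝ ι | ∃ i, P i ∧ v = EuclideanSpace.single i 1}
  set t : EuclideanSpace ℝ ι := ∑ i with P i, x i • EuclideanSpace.single i 1
  have ht : t ∈ W := Submodule.sum_mem _ fun i hi =>
    Submodule.smul_mem _ _ (Submodule.subset_span ⟨i, (mem_filter.1 hi).2, rfl⟩)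
  have ht_apply : ∀ i, t i = if P i then x i else 0 := fun i => by
    simp [t, Pi.single_apply, sum_ite_eq]
  have hvanish : ∀ y ∈ W, ∀ i, ¬ P i → y i = 0 := by
    intro y hy i hi
    induction hy using Submodule.span_induction with
    | mem v hv =>
      obtain ⟨j, hj, rfl⟩ := hv
      simp [show i ≠ j by rintro rfl; exact hi hj]
    | zero => rfl
    | add a b _ _ ha hb => simp [ha, hb]
    | smul r a _ ha => simp [ha]
  have hnorm_t : ‖x - t‖ ^ 2 = ∑ i with ¬ P i, x i ^ 2 := by
    rw [EuclideanSpace.real_norm_sq_eq, sum_filter]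
    refine sum_congr rfl fun i _ => ?_
    by_cases hi : P i <;> simp [ht_apply, hi]
  have hmin : ∀ y ∈ W, ‖x - t‖ ≤ dist x y := by
    intro y hy
    rw [dist_eq_norm, ← pow_le_pow_iff_left₀ (norm_nonneg _) (norm_nonneg _) two_ne_zero,
      hnorm_t, EuclideanSpace.real_norm_sq_eq]
    calc ∑ i with ¬ P i, x i ^ 2 = ∑ i with ¬ P i, ((x - y) i) ^ 2 :=
          sum_congr rfl fun i hi => by simp [hvanish y hy i (mem_filter.1 hi).2]
      _ ≤ ∑ i, ((x - y) i) ^ 2 := sum_le_sum_of_subset_of_nonneg (filter_subset _ _)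
          fun i _ _ => sq_nonneg _
  have hinfDist : Metric.infDist x W = ‖x - t‖ :=
    le_antisymm ((Metric.infDist_le_dist_of_mem ht).trans_eq (dist_eq_norm x t))
      ((Metric.le_infDist ⟨0, W.zero_mem⟩).2 hmin)
  rw [hinfDist, hnorm_t]

theorem ell_planar_best_fit_general
    (k N ℓ : ℕ) (hℓ : 1 ≤ ℓ) (hℓk : ℓ ≤ k - 1)
    (M : Fin N → EuclideanSpace ℝ (Fin k)) (mass : Fin N → ℝ)
    (hmass : ∀ j, 0 < mass j)
    (hcenter : ∀ i : Fin k, ∑ j, mass j * M j i = 0)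
    (hprin : ∀ i l : Fin k, i ≠ l → ∑ j, mass j * (M j i * M j l) = 0)
    (J : Fin k → ℝ) (hJ : ∀ i, J i = ∑ j, mass j * (M j i) ^ 2)
    (hJmono : StrictMono J)
    (W : Submodule ℝ (EuclideanSpace ℝ (Fin k)))
    (hW : W = Submodule.span ℝ
      {v : EuclideanSpace ℝ (Fin k) |
        ∃ i : Fin k, k - ℓ ≤ i.val ∧ v = EuclideanSpace.single i (1 : ℝ)}) :
    (∑ j, mass j * (Metric.infDist (M j) (W : Set (EuclideanSpace ℝ (Fin k)))) ^ 2 =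
        ∑ i ∈ Finset.univ.filter (fun i : Fin k => i.val < k - ℓ), J i) ∧
    ∀ π : AffineSubspace ℝ (EuclideanSpace ℝ (Fin k)),
      (π : Set (EuclideanSpace ℝ (Fin k))).Nonempty →
      Module.finrank ℝ π.direction = ℓ →
      (∑ i ∈ Finset.univ.filter (fun i : Fin k => i.val < k - ℓ), J i) ≤
        ∑ j, mass j * (Metric.infDist (M j) (π : Set (EuclideanSpace ℝ (Fin k)))) ^ 2 := by
  constructor
  · subst hW
    simp_rw [EuclideanSpace.infDist_span_single_sq, not_le, mul_sum, hJ]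
    exact sum_comm
  · rintro π ⟨q, hq⟩ hdim
    set U := π.directionᗮ
    set e := EuclideanSpace.basisFun (Fin k) ℝ
    have hU : Module.finrank ℝ U = k - ℓ := by
      have := π.direction.finrank_add_finrank_orthogonal
      rw [finrank_euclideanSpace_fin, hdim] at this
      exact Nat.eq_sub_of_add_eq' this
    have hcenter_proj : ∑ j, mass j • U.starProjection (M j) = 0 := by
      have : ∑ j, mass j • M j = 0 := by
        ext i
        simp only [WithLp.ofLp_sum, WithLp.ofLp_smul, Finset.sum_apply, Pi.smul_apply,
          smul_eq_mul, WithLp.ofLp_zero, Pi.zero_apply]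
        exact hcenter i
      rw [← map_zero U.starProjection, ← this, map_sum]
      simp only [map_smul]
    calc ∑ i with i.val < k - ℓ, J i ≤ ∑ p, ‖U.starProjection (e p)‖ ^ 2 * J p :=
          hJmono.monotone.sum_filter_val_lt_le_sum_mul (m := k - ℓ) (by omega) (Nat.sub_le k ℓ)
            (fun p => sq_nonneg _)
            (fun p => pow_le_one₀ (norm_nonneg _)
              ((U.norm_starProjection_apply_le (e p)).trans_eq (e.orthonormal.1 p)))
            (by rw [e.sum_norm_starProjection_sq, hU])
      _ = ∑ j, mass j * ‖U.starProjection (M j)‖ ^ 2 := by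
          simp only [hJ]
          exact (sum_mul_norm_map_sq mass M hprin U.starProjection.toLinearMap).symm
      _ ≤ ∑ j, mass j * ‖U.starProjection (M j) - U.starProjection q‖ ^ 2 :=
          sum_mul_norm_sq_le_sum_mul_norm_sub_sq _ (fun j _ => (hmass j).le) hcenter_proj _
      _ ≤ ∑ j, mass j * Metric.infDist (M j) π ^ 2 := by
          gcongr with j _
          · exact (hmass j).le
          rw [← map_sub]
          exact norm_starProjection_sub_le_infDist hq U π.direction.le_orthogonal_orthogonal _

/-- ℓ-planar best fit: in principal central coordinates with hyperplanar moments
`0 < J₁ < … < J_k`, the minimum over all ℓ-dimensional affine subspaces `π` of the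
ℓ-planar moment `∑ⱼ mⱼ dist(Mⱼ, π)²` equals `J₁ + … + J_{k-ℓ}`, attained by the
coordinate subspace through the origin spanned by the last `ℓ` basis vectors. -/
theorem ell_planar_best_fit
    (k N ℓ : ℕ) (hℓ : 1 ≤ ℓ) (hℓk : ℓ ≤ k - 1)
    (M : Fin N → EuclideanSpace ℝ (Fin k)) (mass : Fin N → ℝ)
    (hmass : ∀ j, 0 < mass j)
    (hcenter : ∀ i : Fin k, ∑ j, mass j * M j i = 0)
    (hprin : ∀ i l : Fin k, i ≠ l → ∑ j, mass j * (M j i * M j l) = 0)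
    (J : Fin k → ℝ) (hJ : ∀ i, J i = ∑ j, mass j * (M j i) ^ 2)
    (hJpos : ∀ i, 0 < J i) (hJmono : StrictMono J)
    (W : Submodule ℝ (EuclideanSpace ℝ (Fin k)))
    (hW : W = Submodule.span ℝ
      {v : EuclideanSpace ℝ (Fin k) |
        ∃ i : Fin k, k - ℓ ≤ i.val ∧ v = EuclideanSpace.single i (1 : ℝ)}) :
    (∑ j, mass j * (Metric.infDist (M j) (W : Set (EuclideanSpace ℝ (Fin k)))) ^ 2 =
        ∑ i ∈ Finset.univ.filter (fun i : Fin k => i.val < k - ℓ), J i) ∧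
    ∀ π : AffineSubspace ℝ (EuclideanSpace ℝ (Fin k)),
      (π : Set (EuclideanSpace ℝ (Fin k))).Nonempty →
      Module.finrank ℝ π.direction = ℓ →
      (∑ i ∈ Finset.univ.filter (fun i : Fin k => i.val < k - ℓ), J i) ≤
        ∑ j, mass j * (Metric.infDist (M j) (π : Set (EuclideanSpace ℝ (Fin k)))) ^ 2 :=
  ell_planar_best_fit_general k N ℓ hℓ hℓk M mass hmass hcenter hprin J hJ hJmono W hW
end
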